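/- arXiv:1604.08040 — 2 statements merged into one kernel-verified Lean document; each statement's English description precedes it below -/
import Mathlib

section
/- Let S be a set of L-clauses and let S* denote the set of all DC-instances of the clauses in S. Then S has a model whose universe has cardinality n if and only if S* has a DC-model. -/
namespace FMF

/-- A (single-sorted) first-order language: function symbols and predicate
symbols, each with an arity. -/
structure Lang : Type 1 where
  Func : Type
  funAr : Func → ℕ
  Pred : Type
  predAr : Pred → ℕ

/-- First-order terms of a language `L` with variables drawn from `V`. -/
inductive Term (L : Lang) (V : Type) : Type where
  | var : V → Term L V
  | app : (f : L.Func) → (Fin (L.funAr f) → Term L V) → Term L V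

/-- A structure (interpretation) for the language `L` with universe `M`. -/
structure Struc (L : Lang) (M : Type) : Type where
  funM : (f : L.Func) → (Fin (L.funAr f) → M) → M
  predM : (p : L.Pred) → (Fin (L.predAr p) → M) → Prop

/-- Evaluation of a term in a structure under a variable assignment. -/
def Term.eval {L : Lang} {V M : Type} (S : Struc L M) (v : V → M) : Term L V → M
  | .var x => v x
  | .app f ts => S.funM f (fun i => (ts i).eval S v)

/-- Literals: (possibly negated) predicate atoms and (possibly negated) equalities. -/
inductive Literal (L : Lang) (V : Type) : Type where
  | pos (p : L.Pred) (ts : Fin (L.predAr p) → Term L V)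
  | neg (p : L.Pred) (ts : Fin (L.predAr p) → Term L V)
  | eq (t s : Term L V)
  | ne (t s : Term L V)

/-- Truth of a literal in a structure under a variable assignment. -/
def Literal.holdsUnder {L : Lang} {V M : Type} (S : Struc L M) (v : V → M) :
    Literal L V → Prop
  | .pos p ts => S.predM p (fun i => (ts i).eval S v)
  | .neg p ts => ¬ S.predM p (fun i => (ts i).eval S v)
  | .eq t s => t.eval S v = s.eval S v
  | .ne t s => t.eval S v ≠ s.eval S v

/-- A clause is a disjunction of literals (represented as a list). -/
abbrev Clause (L : Lang) (V : Type) := List (Literal L V)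

/-- Truth of a clause (as a disjunction) under a single variable assignment. -/
def Clause.trueUnder {L : Lang} {V M : Type} (S : Struc L M) (v : V → M)
    (C : Clause L V) : Prop :=
  ∃ l ∈ C, l.holdsUnder S v

/-- Truth of a clause in a structure: all variables are implicitly universally
quantified. -/
def Clause.holds {L : Lang} {V M : Type} (S : Struc L M) (C : Clause L V) : Prop :=
  ∀ v : V → M, C.trueUnder S v

/-- The language `L' = L ∪ DC` obtained from `L` by adding `n` fresh domain
constants `c_1, …, c_n`. -/
def Lang.withConsts (L : Lang) (n : ℕ) : Lang where
  Func := L.Func ⊕ Fin n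
  funAr := Sum.elim L.funAr (fun _ => 0)
  Pred := L.Pred
  predAr := L.predAr

/-- The ground term consisting of the `i`-th domain constant. -/
def dcTerm {L : Lang} {n : ℕ} {V : Type} (i : Fin n) : Term (L.withConsts n) V :=
  .app (Sum.inr i) (fun j => j.elim0)

/-- A `DC`-interpretation: a structure for `L ∪ DC` whose universe is the
`n`-element set `DC` (identified with `Fin n`) interpreting every domain
constant as itself. -/
structure DCInterp (L : Lang) (n : ℕ) : Type where
  S : Struc (L.withConsts n) (Fin n)
  dc_self : ∀ (i : Fin n) (e : Fin 0 → Fin n), S.funM (Sum.inr i) e = i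

/-- The reduct of an `L ∪ DC`-structure to the language `L`. -/
def Struc.reduct {L : Lang} {n : ℕ} {M : Type} (S : Struc (L.withConsts n) M) :
    Struc L M where
  funM f := S.funM (Sum.inl f)
  predM p := S.predM p

/-- Lift an `L`-term to an `L ∪ DC`-term. -/
def Term.lift {L : Lang} {n : ℕ} {V : Type} : Term L V → Term (L.withConsts n) V
  | .var x => .var x
  | .app f ts => .app (Sum.inl f) (fun i => (ts i).lift)

/-- Substituting domain constants for all variables of a term. -/
def Term.substDC {L : Lang} {n : ℕ} {V : Type} (σ : V → Fin n) :
    Term (L.withConsts n) V → Term (L.withConsts n) Empty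
  | .var x => dcTerm (σ x)
  | .app f ts => .app f (fun i => (ts i).substDC σ)

/-- Lift an `L`-literal to an `L ∪ DC`-literal. -/
def Literal.lift {L : Lang} {n : ℕ} {V : Type} : Literal L V → Literal (L.withConsts n) V
  | .pos p ts => .pos p (fun i => (ts i).lift)
  | .neg p ts => .neg p (fun i => (ts i).lift)
  | .eq t s => .eq t.lift s.lift
  | .ne t s => .ne t.lift s.lift

/-- Substituting domain constants for all variables of a literal. -/
def Literal.substDC {L : Lang} {n : ℕ} {V : Type} (σ : V → Fin n) :
    Literal (L.withConsts n) V → Literal (L.withConsts n) Empty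
  | .pos p ts => .pos p (fun i => (ts i).substDC σ)
  | .neg p ts => .neg p (fun i => (ts i).substDC σ)
  | .eq t s => .eq (t.substDC σ) (s.substDC σ)
  | .ne t s => .ne (t.substDC σ) (s.substDC σ)

/-- Substituting domain constants for all variables of an `L ∪ DC`-clause,
yielding a ground clause. -/
def Clause.substDC {L : Lang} {n : ℕ} {V : Type} (σ : V → Fin n)
    (C : Clause (L.withConsts n) V) : Clause (L.withConsts n) Empty :=
  C.map (Literal.substDC σ)

/-- The `DC`-instance of an `L`-clause determined by the substitution `σ`:
the ground `L ∪ DC`-clause obtained by replacing every variable `x` by the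
domain constant `σ x`. -/
def Clause.toDC {L : Lang} {n : ℕ} {V : Type} (σ : V → Fin n) (C : Clause L V) :
    Clause (L.withConsts n) Empty :=
  Clause.substDC σ (C.map Literal.lift)

/-- A principal term `f(d_1,…,d_m)`: a function symbol of `L` applied to
domain constants. -/
def pTerm {L : Lang} {n : ℕ} (f : L.Func) (d : Fin (L.funAr f) → Fin n) :
    Term (L.withConsts n) Empty :=
  .app (Sum.inl f) (fun i => dcTerm (d i))

/-- The functionality definition `p ≠ d₁ ∨ p ≠ d₂` for the principal term
`p = f(d)` and domain constants `d₁, d₂`. -/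
def funcClause {L : Lang} {n : ℕ} (f : L.Func) (d : Fin (L.funAr f) → Fin n)
    (d₁ d₂ : Fin n) : Clause (L.withConsts n) Empty :=
  [.ne (pTerm f d) (dcTerm d₁), .ne (pTerm f d) (dcTerm d₂)]

/-- The totality definition `p = c₁ ∨ … ∨ p = c_n` for the principal term
`p = f(d)`. -/
def totClause {L : Lang} {n : ℕ} (f : L.Func) (d : Fin (L.funAr f) → Fin n) :
    Clause (L.withConsts n) Empty :=
  List.ofFn (fun j : Fin n => Literal.eq (pTerm f d) (dcTerm j))

/-- A principal atom: either `p(d_1,…,d_m)` for a predicate symbol `p` of `L`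
and domain constants `d_i`, or `t = d` for a principal term `t` and a domain
constant `d`. -/
def IsPrincipalAtom {L : Lang} {n : ℕ} (A : Literal (L.withConsts n) Empty) : Prop :=
  (∃ (p : L.Pred) (d : Fin (L.predAr p) → Fin n),
      A = Literal.pos (L := L.withConsts n) p (fun i => dcTerm (d i))) ∨
  (∃ (f : L.Func) (d : Fin (L.funAr f) → Fin n) (e : Fin n),
      A = Literal.eq (pTerm f d) (dcTerm e))

/-- A principal literal: a principal atom or its negation. -/
def IsPrincipalLit {L : Lang} {n : ℕ} (l : Literal (L.withConsts n) Empty) : Prop :=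
  (∃ (p : L.Pred) (d : Fin (L.predAr p) → Fin n),
      l = Literal.pos (L := L.withConsts n) p (fun i => dcTerm (d i))) ∨
  (∃ (p : L.Pred) (d : Fin (L.predAr p) → Fin n),
      l = Literal.neg (L := L.withConsts n) p (fun i => dcTerm (d i))) ∨
  (∃ (f : L.Func) (d : Fin (L.funAr f) → Fin n) (e : Fin n),
      l = Literal.eq (pTerm f d) (dcTerm e)) ∨
  (∃ (f : L.Func) (d : Fin (L.funAr f) → Fin n) (e : Fin n),
      l = Literal.ne (pTerm f d) (dcTerm e))


/-!
In a `DC`-interpretation the constant `c_i` denotes `i`, so a `DC`-instance `Cσ` is true there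
exactly when `C` is true in the `L`-reduct under the assignment `σ`. Hence a `DC`-interpretation
is a model of `S*` iff its reduct is a model of `S` on `Fin n`. Conversely, a model of
cardinality `n` is transported along a bijection onto `Fin n` and expanded by `c_i ↦ i`.
-/

section Instances

variable {L : Lang} {V : Type} {n : ℕ}

theorem Term.eval_substDC_lift (I : DCInterp L n) (σ : V → Fin n) (e : Empty → Fin n)
    (t : Term L V) : ((Term.lift t).substDC σ).eval I.S e = t.eval I.S.reduct σ := by
  induction t with
  | var x => exact I.dc_self (σ x) _
  | app f ts ih =>
    simp only [Term.lift, Term.substDC, Term.eval, Struc.reduct]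
    exact congrArg _ (funext ih)

theorem Literal.holdsUnder_substDC_lift (I : DCInterp L n) (σ : V → Fin n)
    (e : Empty → Fin n) (l : Literal L V) :
    ((Literal.lift l).substDC σ).holdsUnder I.S e ↔ l.holdsUnder I.S.reduct σ := by
  cases l <;>
    simp only [Literal.lift, Literal.substDC, Literal.holdsUnder, Term.eval_substDC_lift] <;>
    rfl

theorem Clause.trueUnder_toDC (I : DCInterp L n) (σ : V → Fin n) (e : Empty → Fin n)
    (C : Clause L V) : (C.toDC σ).trueUnder I.S e ↔ C.trueUnder I.S.reduct σ := by
  simp only [Clause.trueUnder, Clause.toDC, Clause.substDC, List.map_map, List.mem_map,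
    Function.comp_apply, exists_exists_and_eq_and, Literal.holdsUnder_substDC_lift]

theorem Clause.holds_toDC (I : DCInterp L n) (σ : V → Fin n) (C : Clause L V) :
    (C.toDC σ).holds I.S ↔ C.trueUnder I.S.reduct σ :=
  ⟨fun h => (trueUnder_toDC I σ _ C).1 (h Empty.elim),
    fun h e => (trueUnder_toDC I σ e C).2 h⟩

theorem DCInterp.holds_instances_iff (I : DCInterp L n) (SS : Set (Clause L V)) :
    (∀ D ∈ {D : Clause (L.withConsts n) Empty | ∃ C ∈ SS, ∃ σ : V → Fin n, D = C.toDC σ},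
        D.holds I.S) ↔
      ∀ C ∈ SS, C.holds I.S.reduct := by
  constructor
  · intro h C hC σ
    exact (Clause.holds_toDC I σ C).1 (h _ ⟨C, hC, σ, rfl⟩)
  · rintro h D ⟨C, hC, σ, rfl⟩
    exact (Clause.holds_toDC I σ C).2 (h C hC σ)

end Instances

section Transport

variable {L : Lang} {V M N : Type}

def Struc.push (S : Struc L M) (φ : M ≃ N) : Struc L N where
  funM f a := φ (S.funM f (φ.symm ∘ a))
  predM p a := S.predM p (φ.symm ∘ a)

theorem Term.eval_push (S : Struc L M) (φ : M ≃ N) (v : V → N) (t : Term L V) :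
    t.eval (S.push φ) v = φ (t.eval S (φ.symm ∘ v)) := by
  induction t with
  | var x => exact (φ.apply_symm_apply (v x)).symm
  | app f ts ih =>
    show φ (S.funM f (φ.symm ∘ fun i => (ts i).eval (S.push φ) v)) = _
    simp only [Function.comp_def, ih, Equiv.symm_apply_apply]
    rfl

theorem Literal.holdsUnder_push (S : Struc L M) (φ : M ≃ N) (v : V → N) (l : Literal L V) :
    l.holdsUnder (S.push φ) v ↔ l.holdsUnder S (φ.symm ∘ v) := by
  cases l <;>
    simp only [Literal.holdsUnder, Term.eval_push, ne_eq, φ.apply_eq_iff_eq] <;>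
    simp only [Struc.push, Function.comp_def, Equiv.symm_apply_apply]

theorem Clause.holds_push (S : Struc L M) (φ : M ≃ N) (C : Clause L V) :
    C.holds (S.push φ) ↔ C.holds S := by
  simp only [Clause.holds, Clause.trueUnder, Literal.holdsUnder_push]
  refine ⟨fun h v => ?_, fun h v => h _⟩
  simpa [Function.comp_def] using h (φ ∘ v)

end Transport

def DCInterp.ofStruc {L : Lang} {n : ℕ} (S : Struc L (Fin n)) : DCInterp L n where
  S :=
    { funM := fun
        | .inl f => S.funM f
        | .inr i => fun _ => i
      predM := S.predM }
  dc_self _ _ := rfl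

theorem DCInterp.reduct_ofStruc {L : Lang} {n : ℕ} (S : Struc L (Fin n)) :
    (ofStruc S).S.reduct = S := rfl

/-- Let `S` be a set of `L`-clauses and `S*` the set of all
`DC`-instances of the clauses in `S`.  Then `S` has a model whose universe has
cardinality `n` if and only if `S*` has a `DC`-model. -/
theorem n_satisfiable_iff_instances_have_dc_model
    (L : Lang) (V : Type) (n : ℕ) (hn : 1 ≤ n) (SS : Set (Clause L V)) :
    (∃ (M : Type) (S : Struc L M), Nat.card M = n ∧ ∀ C ∈ SS, Clause.holds S C) ↔
      (∃ I : DCInterp L n,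
        ∀ D ∈ {D : Clause (L.withConsts n) Empty |
                ∃ C ∈ SS, ∃ σ : V → Fin n, D = Clause.toDC σ C},
          Clause.holds I.S D) := by
  simp only [DCInterp.holds_instances_iff]
  constructor
  · rintro ⟨M, S, hcard, hS⟩
    have : Finite M := Nat.finite_of_card_ne_zero (by omega)
    let φ : M ≃ Fin n := Finite.equivFinOfCardEq hcard
    refine ⟨DCInterp.ofStruc (S.push φ), fun C hC => ?_⟩
    rw [DCInterp.reduct_ofStruc, Clause.holds_push]
    exact hS C hC
  · rintro ⟨I, hI⟩
    exact ⟨Fin n, I.S.reduct, Nat.card_fin n, hI⟩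

end FMF
end

section
/- Let S be a set of L-clauses and let a_1,…,a_l be constant symbols of L, arbitrarily ordered. If S has a DC-model, then S has a DC-model M satisfying the symmetry-breaking constraints: identifying the universe DC with {1,…,n}, the interpretation of a_1 in M is 1 (i.e., c_1), and for every 1 < i ≤ l the interpretation of a_i in M is at most 1 + max_{j < i} (interpretation of a_j in M); consequently the interpretation of a_i is among the first min(i, n) domain constants. -/
/-!
Permuting the universe of a `DC`-interpretation (while keeping the domain constants fixed)
yields an isomorphic copy of its `L`-reduct, so it is again a model of `S`. It therefore suffices
to find a permutation `π` of `Fin n` turning the sequence `v` of interpretations of `a_1, …, a_l`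
into a restricted growth string: every value below `π (v j)` already occurs before `j`. Such a
`π` is built position by position, each step swapping a value that is too large with the least
value not used so far. Restricted growth gives all three constraints, the last one because the
values below `π (v j)` are hit by the `j` earlier positions.
-/

namespace FMF

section Transport

variable {L : Lang} {V M N : Type}

def Struc.map (S : Struc L M) (e : M ≃ N) : Struc L N where
  funM f xs := e (S.funM f (e.symm ∘ xs))
  predM p xs := S.predM p (e.symm ∘ xs)

theorem Term.eval_map (S : Struc L M) (e : M ≃ N) (v : V → N) :
    ∀ t : Term L V, t.eval (S.map e) v = e (t.eval S (e.symm ∘ v))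
  | .var x => (e.apply_symm_apply (v x)).symm
  | .app f ts => congrArg (fun xs => e (S.funM f xs)) <| funext fun i => by
      simp only [Function.comp_apply, Term.eval_map S e v (ts i), Equiv.symm_apply_apply]

theorem Literal.holdsUnder_map (S : Struc L M) (e : M ≃ N) (v : V → N) (lit : Literal L V) :
    lit.holdsUnder (S.map e) v ↔ lit.holdsUnder S (e.symm ∘ v) := by
  cases lit <;> simp only [Literal.holdsUnder, Term.eval_map, EmbeddingLike.apply_eq_iff_eq, ne_eq]
  all_goals simp only [Struc.map, Function.comp_def, Equiv.symm_apply_apply]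

theorem Clause.holds_map (S : Struc L M) (e : M ≃ N) (C : Clause L V) :
    C.holds (S.map e) ↔ C.holds S := by
  have trueUnder_map (v : V → N) : C.trueUnder (S.map e) v ↔ C.trueUnder S (e.symm ∘ v) :=
    exists_congr fun lit => and_congr_right fun _ => lit.holdsUnder_map S e v
  refine ⟨fun h v => ?_, fun h v => (trueUnder_map v).2 (h _)⟩
  simpa [Function.comp_def] using (trueUnder_map (e ∘ v)).1 (h _)

end Transport

/-- Only the `L`-part is transported along `π`: the domain constants must keep denoting
themselves. -/
def DCInterp.perm {L : Lang} {n : ℕ} (I : DCInterp L n) (π : Equiv.Perm (Fin n)) :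
    DCInterp L n where
  S :=
    { funM := fun
        | .inl f => (I.S.reduct.map π).funM f
        | .inr i => fun _ => i
      predM := (I.S.reduct.map π).predM }
  dc_self _ _ := rfl

theorem DCInterp.reduct_perm {L : Lang} {n : ℕ} (I : DCInterp L n) (π : Equiv.Perm (Fin n)) :
    (I.perm π).S.reduct = I.S.reduct.map π :=
  rfl

section RestrictedGrowth

variable {α : Type*} {l : ℕ}

def IsRestrictedGrowth [LT α] (w : Fin l → α) : Prop :=
  ∀ j x, x < w j → ∃ k < j, w k = x

/-- If `π (v j₀)` is too large, swap it with the least value not used before `j₀`; the values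
before `j₀` are untouched by the swap. -/
theorem exists_perm_restrictedGrowth_upTo [LinearOrder α] [WellFoundedLT α] (v : Fin l → α)
    (π : Equiv.Perm α) (j₀ : Fin l) (hπ : ∀ j < j₀, ∀ x < π (v j), ∃ k < j, π (v k) = x) :
    ∃ π' : Equiv.Perm α, ∀ j ≤ j₀, ∀ x < π' (v j), ∃ k < j, π' (v k) = x := by
  by_cases hj₀ : ∀ x < π (v j₀), ∃ k < j₀, π (v k) = x
  · exact ⟨π, fun j hj => hj.lt_or_eq.elim (hπ j) (· ▸ hj₀)⟩
  push Not at hj₀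
  obtain ⟨x, ⟨hx, hx_new⟩, hx_min⟩ := exists_minimal_of_wellFoundedLT _ hj₀
  have h_old (k : Fin l) (hk : k < j₀) : (Equiv.swap x (π (v j₀)) * π) (v k) = π (v k) := by
    refine Equiv.swap_apply_of_ne_of_ne (hx_new k hk) fun h => ?_
    obtain ⟨k', hk', hk'x⟩ := hπ k hk x (h ▸ hx)
    exact hx_new k' (hk'.trans hk) hk'x
  refine ⟨Equiv.swap x (π (v j₀)) * π, fun j hj y hy => ?_⟩
  rcases hj.lt_or_eq with hj | rfl
  · obtain ⟨k, hk, rfl⟩ := hπ j hj y (h_old j hj ▸ hy)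
    exact ⟨k, hk, h_old k (hk.trans hj)⟩
  · rw [Equiv.Perm.mul_apply, Equiv.swap_apply_right] at hy
    have hy_old : ∃ k < j, π (v k) = y := by
      by_contra! hy_new
      exact (hx_min ⟨hy.trans hx, hy_new⟩ hy.le).not_gt hy
    obtain ⟨k, hk, rfl⟩ := hy_old
    exact ⟨k, hk, h_old k hk⟩

theorem exists_perm_isRestrictedGrowth_comp [LinearOrder α] [WellFoundedLT α] (v : Fin l → α) :
    ∃ π : Equiv.Perm α, IsRestrictedGrowth (π ∘ v) := by
  suffices ∀ m : ℕ, ∃ π : Equiv.Perm α, ∀ j : Fin l, j.val < m →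
      ∀ x < π (v j), ∃ k < j, π (v k) = x by
    obtain ⟨π, hπ⟩ := this l
    exact ⟨π, fun j => hπ j j.isLt⟩
  intro m
  induction m with
  | zero => exact ⟨1, fun j hj => absurd hj (Nat.not_lt_zero _)⟩
  | succ m ih =>
    obtain ⟨π, hπ⟩ := ih
    by_cases hm : m < l
    · obtain ⟨π', hπ'⟩ := exists_perm_restrictedGrowth_upTo v π ⟨m, hm⟩
        fun j hj => hπ j (Fin.lt_def.1 hj)
      exact ⟨π', fun j hj => hπ' j (Fin.le_def.2 (Nat.le_of_lt_succ hj))⟩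
    · exact ⟨π, fun j _ => hπ j (by omega)⟩

namespace IsRestrictedGrowth

variable {n : ℕ} {w : Fin l → Fin n}

theorem val_eq_zero (hw : IsRestrictedGrowth w) (j : Fin l) (hj : j.val = 0) :
    (w j).val = 0 := by
  by_contra h
  obtain ⟨k, hk, -⟩ := hw j ⟨0, (w j).pos⟩ (Fin.lt_def.2 (Nat.pos_of_ne_zero h))
  exact absurd (Fin.lt_def.1 hk) (by omega)

theorem val_le_one_add_sup (hw : IsRestrictedGrowth w) (j : Fin l) :
    (w j).val ≤ 1 + (Finset.univ.filter (fun k => k < j)).sup (fun k => (w k).val) := by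
  rcases Nat.eq_zero_or_pos (w j).val with h | h
  · omega
  obtain ⟨k, hk, hwk⟩ := hw j ⟨(w j).val - 1, by omega⟩ (Fin.lt_def.2 (Nat.sub_lt h one_pos))
  have h_sup : (w k).val ≤ (Finset.univ.filter (fun k => k < j)).sup (fun k => (w k).val) :=
    Finset.le_sup (f := fun k => (w k).val) (by simpa using hk)
  have h_wk : (w k).val = (w j).val - 1 := congrArg Fin.val hwk
  omega

theorem val_le (hw : IsRestrictedGrowth w) (j : Fin l) : (w j).val ≤ j.val := by
  have h_sub : Finset.Iio (w j) ⊆ (Finset.Iio j).image w := fun x hx => by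
    obtain ⟨k, hk, rfl⟩ := hw j x (Finset.mem_Iio.1 hx)
    exact Finset.mem_image_of_mem w (Finset.mem_Iio.2 hk)
  calc (w j).val = (Finset.Iio (w j)).card := (Fin.card_Iio _).symm
    _ ≤ ((Finset.Iio j).image w).card := Finset.card_le_card h_sub
    _ ≤ (Finset.Iio j).card := Finset.card_image_le
    _ = j.val := Fin.card_Iio _

end IsRestrictedGrowth

end RestrictedGrowth

theorem symmetry_breaking_general (L : Lang) (V : Type) (n : ℕ)
    (SS : Set (Clause L V)) (l : ℕ) (a : Fin l → L.Func)
    (ha : ∀ j, L.funAr (a j) = 0)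
    (hex : ∃ I : DCInterp L n, ∀ C ∈ SS, Clause.holds I.S.reduct C) :
    ∃ I : DCInterp L n,
      (∀ C ∈ SS, Clause.holds I.S.reduct C) ∧
      (let val : Fin l → Fin n := fun j =>
          I.S.funM (Sum.inl (a j)) (fun i => (Fin.cast (ha j) i).elim0)
       (∀ j : Fin l, j.val = 0 → (val j).val = 0) ∧
       (∀ j : Fin l, 0 < j.val →
          (val j).val ≤
            1 + (Finset.univ.filter (fun k => k < j)).sup (fun k => (val k).val)) ∧
       (∀ j : Fin l, (val j).val < min (j.val + 1) n)) := by
  obtain ⟨I, hI⟩ := hex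
  let v : Fin l → Fin n := fun j => I.S.funM (Sum.inl (a j)) (fun i => (Fin.cast (ha j) i).elim0)
  obtain ⟨π, hπ⟩ := exists_perm_isRestrictedGrowth_comp v
  have val_perm (j : Fin l) :
      (I.perm π).S.funM (Sum.inl (a j)) (fun i => (Fin.cast (ha j) i).elim0) = π (v j) :=
    congrArg (fun xs => π (I.S.funM (Sum.inl (a j)) xs)) (funext fun i => (Fin.cast (ha j) i).elim0)
  refine ⟨I.perm π, fun C hC => (I.reduct_perm π ▸ Clause.holds_map _ _ C).2 (hI C hC), ?_⟩
  simp only [val_perm]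
  exact ⟨hπ.val_eq_zero, fun j _ => hπ.val_le_one_add_sup j,
    fun j => lt_min (Nat.lt_succ_of_le (hπ.val_le j)) (π (v j)).isLt⟩

/-- If `S` has a `DC`-model, then `S` has a `DC`-model
satisfying the symmetry-breaking constraints on the (0-indexed) interpretations
of the ordered constants `a_0, …, a_{l-1}`: `a_0` is interpreted by the first
domain constant, the interpretation of each `a_j` is at most one more than the
maximum of the interpretations of the earlier constants, and consequently the
interpretation of `a_j` is among the first `min (j+1) n` domain constants. -/
theorem symmetry_breaking (L : Lang) (V : Type) (n : ℕ) (hn : 1 ≤ n)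
    (SS : Set (Clause L V)) (l : ℕ) (a : Fin l → L.Func)
    (ha : ∀ j, L.funAr (a j) = 0)
    (hex : ∃ I : DCInterp L n, ∀ C ∈ SS, Clause.holds I.S.reduct C) :
    ∃ I : DCInterp L n,
      (∀ C ∈ SS, Clause.holds I.S.reduct C) ∧
      (let val : Fin l → Fin n := fun j =>
          I.S.funM (Sum.inl (a j)) (fun i => (Fin.cast (ha j) i).elim0)
       (∀ j : Fin l, j.val = 0 → (val j).val = 0) ∧
       (∀ j : Fin l, 0 < j.val →
          (val j).val ≤
            1 + (Finset.univ.filter (fun k => k < j)).sup (fun k => (val k).val)) ∧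
       (∀ j : Fin l, (val j).val < min (j.val + 1) n)) :=
  symmetry_breaking_general L V n SS l a ha hex

end FMF
end
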